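/- The $\lambda$-semidirect product of an inverse semigroup $G$ acting by endomorphisms on an inverse semigroup $A$ is itself an inverse semigroup. -/

import Mathlib

/-- A semigroup is inverse if every element has a unique inverse. -/
def IsInverseSemigroup (S : Type*) [Semigroup S] : Prop :=
  ∀ x : S, ∃! y : S, x * y * x = x ∧ y * x * y = y

/-- Multiplication of the λ-semidirect product of `G` acting on `A`. -/
def lamMul {A G : Type*} [Mul A] [Mul G] (act : G → A → A) (invG : G → G)
    (p q : A × G) : A × G :=
  (act ((p.2 * q.2) * invG (p.2 * q.2)) p.1 * act p.2 q.1, p.2 * q.2)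

/-- Underlying set of the λ-semidirect product of `G` acting on `A`. -/
def lamSet {A G : Type*} [Mul G] (act : G → A → A) (invG : G → G) : Set (A × G) :=
  {p | act (p.2 * invG p.2) p.1 = p.1}

/-! In an inverse semigroup `G`, the idempotents `h h⁻¹` and `g⁻¹ g` commute, which gives
`(g h)(g h)⁻¹ g = g (h h⁻¹)`; this identity makes the λ-semidirect product closed and
associative. As a regular semigroup whose idempotents commute is inverse, it then remains to
see that the product is regular and that its idempotents commute. An inverse of `(a, g)` is
`(g⁻¹ · a', g⁻¹)`, where `a'` is an inverse of `a` fixed by `g g⁻¹` (the image of any inverse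
under `g g⁻¹` will do). An idempotent `(a, g)` has `a`, `g` idempotent and `g · a = a`, and two
such idempotents multiply to `(g h · a b, g h)`, which is symmetric because idempotents commute
in `A` and in `G`. -/

namespace IsInverseSemigroup

variable {S : Type*} [Semigroup S]

theorem isIdempotentElem_mul (hS : IsInverseSemigroup S) {e f : S}
    (he : IsIdempotentElem e) (hf : IsIdempotentElem f) : IsIdempotentElem (e * f) := by
  obtain ⟨x, ⟨hx₁, hx₂⟩, hx_unique⟩ := hS (e * f)
  -- `f * x * e` is again an inverse of `e * f`, hence equals `x`
  have hfxe : f * x * e = x := by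
    refine hx_unique _ ⟨?_, ?_⟩
    · calc e * f * (f * x * e) * (e * f) = e * (f * f) * x * (e * e) * f := by
            simp only [mul_assoc]
        _ = e * f * x * (e * f) := by rw [he.eq, hf.eq]; simp only [mul_assoc]
        _ = e * f := hx₁
    · calc f * x * e * (e * f) * (f * x * e) = f * (x * (e * e) * (f * f) * x) * e := by
            simp only [mul_assoc]
        _ = f * x * e := by rw [he.eq, hf.eq, mul_assoc x e f, hx₂]
  have hx : IsIdempotentElem x := by
    calc x * x = f * (x * (e * f) * x) * e := by
          conv_lhs => rw [← hfxe]
          simp only [mul_assoc]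
      _ = x := by rw [hx₂, hfxe]
  have : e * f = x :=
    (hS x).unique ⟨hx₂, hx₁⟩ ⟨by rw [hx.eq, hx.eq], by rw [hx.eq, hx.eq]⟩
  rw [this]
  exact hx

theorem commute_of_isIdempotentElem (hS : IsInverseSemigroup S) {e f : S}
    (he : IsIdempotentElem e) (hf : IsIdempotentElem f) : Commute e f := by
  have hef := hS.isIdempotentElem_mul he hf
  have hfe := hS.isIdempotentElem_mul hf he
  refine (hS (e * f)).unique ⟨by rw [hef.eq, hef.eq], by rw [hef.eq, hef.eq]⟩ ⟨?_, ?_⟩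
  · calc e * f * (f * e) * (e * f) = e * (f * f) * (e * e) * f := by simp only [mul_assoc]
      _ = e * f * (e * f) := by rw [he.eq, hf.eq]; simp only [mul_assoc]
      _ = e * f := hef
  · calc f * e * (e * f) * (f * e) = f * (e * e) * (f * f) * e := by simp only [mul_assoc]
      _ = f * e * (f * e) := by rw [he.eq, hf.eq]; simp only [mul_assoc]
      _ = f * e := hfe

theorem of_regular_of_commute (hreg : ∀ x : S, ∃ y, x * y * x = x ∧ y * x * y = y)
    (hcomm : ∀ e f : S, IsIdempotentElem e → IsIdempotentElem f → Commute e f) :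
    IsInverseSemigroup S := by
  intro x
  obtain ⟨y, hy₁, hy₂⟩ := hreg x
  refine ⟨y, ⟨hy₁, hy₂⟩, fun z ⟨hz₁, hz₂⟩ => ?_⟩
  have idem_right {w : S} (hw : x * w * x = x) : IsIdempotentElem (x * w) := by
    rw [IsIdempotentElem, ← mul_assoc, hw]
  have idem_left {w : S} (hw : x * w * x = x) : IsIdempotentElem (w * x) := by
    rw [IsIdempotentElem, mul_assoc, ← mul_assoc x, hw]
  calc z = z * (x * y * x) * z := by rw [hy₁, hz₂]
    _ = z * ((x * y) * (x * z)) := by simp only [mul_assoc]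
    _ = z * ((x * z) * (x * y)) := by rw [(hcomm _ _ (idem_right hy₁) (idem_right hz₁)).eq]
    _ = (z * x * z) * (x * y) := by simp only [mul_assoc]
    _ = z * (x * y * x) * y := by rw [hz₂, hy₁, mul_assoc]
    _ = (z * x) * (y * x) * y := by simp only [mul_assoc]
    _ = (y * x) * (z * x) * y := by rw [(hcomm _ _ (idem_left hz₁) (idem_left hy₁)).eq]
    _ = y * (x * z * x) * y := by simp only [mul_assoc]
    _ = y := by rw [hz₁, hy₂]

variable {inv : S → S} (hinv : ∀ x, x * inv x * x = x ∧ inv x * x * inv x = inv x)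
include hinv

theorem isIdempotentElem_mul_inv_self (x : S) : IsIdempotentElem (x * inv x) := by
  rw [IsIdempotentElem, ← mul_assoc, (hinv x).1]

theorem isIdempotentElem_inv_mul_self (x : S) : IsIdempotentElem (inv x * x) := by
  rw [IsIdempotentElem, ← mul_assoc, (hinv x).2]

variable (hS : IsInverseSemigroup S)
include hS

theorem eq_inv_of_inverse {x y : S} (h₁ : x * y * x = x) (h₂ : y * x * y = y) : y = inv x :=
  (hS x).unique ⟨h₁, h₂⟩ (hinv x)

theorem inv_inv (x : S) : inv (inv x) = x :=
  (eq_inv_of_inverse hinv hS (hinv x).2 (hinv x).1).symm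

theorem inv_eq_self_of_isIdempotentElem {e : S} (he : IsIdempotentElem e) : inv e = e :=
  (eq_inv_of_inverse hinv hS (by rw [he.eq, he.eq]) (by rw [he.eq, he.eq])).symm

theorem mul_inv_rev (x y : S) : inv (x * y) = inv y * inv x := by
  have hc := (hS.commute_of_isIdempotentElem (isIdempotentElem_mul_inv_self hinv y)
    (isIdempotentElem_inv_mul_self hinv x)).eq
  refine (eq_inv_of_inverse hinv hS ?_ ?_).symm
  · calc x * y * (inv y * inv x) * (x * y) = x * ((y * inv y) * (inv x * x)) * y := by
          simp only [mul_assoc]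
      _ = (x * inv x * x) * (y * inv y * y) := by rw [hc]; simp only [mul_assoc]
      _ = x * y := by rw [(hinv x).1, (hinv y).1]
  · calc inv y * inv x * (x * y) * (inv y * inv x)
          = inv y * ((inv x * x) * (y * inv y)) * inv x := by simp only [mul_assoc]
      _ = (inv y * y * inv y) * (inv x * x * inv x) := by rw [← hc]; simp only [mul_assoc]
      _ = inv y * inv x := by rw [(hinv x).2, (hinv y).2]

theorem mul_mul_inv_mul (x y : S) : x * y * inv (x * y) * x = x * (y * inv y) := by
  have hc := (hS.commute_of_isIdempotentElem (isIdempotentElem_mul_inv_self hinv y)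
    (isIdempotentElem_inv_mul_self hinv x)).eq
  calc x * y * inv (x * y) * x = x * ((y * inv y) * (inv x * x)) := by
        rw [mul_inv_rev hinv hS]; simp only [mul_assoc]
    _ = (x * inv x * x) * (y * inv y) := by rw [hc]; simp only [mul_assoc]
    _ = x * (y * inv y) := by rw [(hinv x).1]

theorem mul_mul_inv_mul_mul_inv (x y : S) :
    x * y * inv (x * y) * (x * inv x) = x * y * inv (x * y) := by
  calc x * y * inv (x * y) * (x * inv x) = x * y * inv (x * y) * x * inv x := by
        simp only [mul_assoc]
    _ = x * y * inv (x * y) := by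
        rw [mul_mul_inv_mul hinv hS, mul_inv_rev hinv hS]; simp only [mul_assoc]

end IsInverseSemigroup

section LambdaSemidirect

open IsInverseSemigroup

variable {A G : Type*} [Semigroup A] [Semigroup G] {invG : G → G} {act : G → A → A}
  (hG : IsInverseSemigroup G)
  (hinvG : ∀ g : G, g * invG g * g = g ∧ invG g * g * invG g = invG g)
  (hact_mul : ∀ (g : G) (a b : A), act g (a * b) = act g a * act g b)
  (hact_comp : ∀ (g h : G) (a : A), act (g * h) a = act g (act h a))

include hG hinvG in
theorem isIdempotentElem_of_lamMul_self_eq {a : A} {g : G} (hp : (a, g) ∈ lamSet act invG)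
    (h : lamMul act invG (a, g) (a, g) = (a, g)) :
    IsIdempotentElem a ∧ IsIdempotentElem g ∧ act g a = a := by
  simp only [lamSet, Set.mem_ofPred_eq, lamMul, Prod.mk.injEq] at hp h
  obtain ⟨ha, hg⟩ := h
  have hg' : IsIdempotentElem g := hg
  rw [inv_eq_self_of_isIdempotentElem hinvG hG hg', hg] at hp
  rw [hg, inv_eq_self_of_isIdempotentElem hinvG hG hg', hg, hp] at ha
  exact ⟨ha, hg', hp⟩

include hG hinvG hact_mul hact_comp

theorem lamMul_mem_lamSet {p q : A × G} (hq : q ∈ lamSet act invG) :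
    lamMul act invG p q ∈ lamSet act invG := by
  obtain ⟨a, g⟩ := p
  obtain ⟨b, h⟩ := q
  simp only [lamSet, Set.mem_ofPred_eq, lamMul] at hq ⊢
  simp only [hact_mul, ← hact_comp]
  rw [(isIdempotentElem_mul_inv_self hinvG _).eq, mul_mul_inv_mul hinvG hG, hact_comp g, hq]

theorem lamMul_assoc (p q r : A × G) :
    lamMul act invG (lamMul act invG p q) r = lamMul act invG p (lamMul act invG q r) := by
  obtain ⟨a, g⟩ := p
  obtain ⟨b, h⟩ := q
  obtain ⟨c, k⟩ := r
  simp only [lamMul, hact_mul, ← hact_comp]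
  rw [mul_mul_inv_mul_mul_inv hinvG hG, mul_assoc g h k, mul_mul_inv_mul hinvG hG, mul_assoc]

theorem lamMul_of_isIdempotentElem {a b : A} {g h : G} (hg : IsIdempotentElem g)
    (hh : IsIdempotentElem h) (hb : act h b = b) :
    lamMul act invG (a, g) (b, h) = (act (g * h) (a * b), g * h) := by
  have hgh := hG.isIdempotentElem_mul hg hh
  simp only [lamMul]
  rw [inv_eq_self_of_isIdempotentElem hinvG hG hgh, hgh.eq, hact_mul, hact_comp g h b, hb]

theorem lamMul_comm_of_idempotent (hA : IsInverseSemigroup A) {p q : A × G}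
    (hp : p ∈ lamSet act invG) (hq : q ∈ lamSet act invG)
    (hpp : lamMul act invG p p = p) (hqq : lamMul act invG q q = q) :
    lamMul act invG p q = lamMul act invG q p := by
  obtain ⟨a, g⟩ := p
  obtain ⟨b, h⟩ := q
  obtain ⟨ha, hg, hga⟩ := isIdempotentElem_of_lamMul_self_eq hG hinvG hp hpp
  obtain ⟨hb, hh, hhb⟩ := isIdempotentElem_of_lamMul_self_eq hG hinvG hq hqq
  rw [lamMul_of_isIdempotentElem hG hinvG hact_mul hact_comp hg hh hhb,
    lamMul_of_isIdempotentElem hG hinvG hact_mul hact_comp hh hg hga,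
    (hA.commute_of_isIdempotentElem ha hb).eq, (hG.commute_of_isIdempotentElem hg hh).eq]

theorem exists_lamMul_inverse (hregA : ∀ a : A, ∃ a', a * a' * a = a ∧ a' * a * a' = a')
    {p : A × G} (hp : p ∈ lamSet act invG) :
    ∃ q ∈ lamSet act invG, lamMul act invG (lamMul act invG p q) p = p ∧
      lamMul act invG (lamMul act invG q p) q = q := by
  obtain ⟨a, g⟩ := p
  simp only [lamSet, Set.mem_ofPred_eq] at hp
  have he := isIdempotentElem_mul_inv_self hinvG g
  have hf := isIdempotentElem_inv_mul_self hinvG g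
  obtain ⟨a', ha'₁, ha'₂, ha'⟩ : ∃ a', a * a' * a = a ∧ a' * a * a' = a' ∧
      act (g * invG g) a' = a' := by
    obtain ⟨a₀, h₁, h₂⟩ := hregA a
    refine ⟨act (g * invG g) a₀, ?_, ?_, by rw [← hact_comp, he.eq]⟩
    · rw [← hp, ← hact_mul, ← hact_mul, h₁]
    · conv_lhs => rw [← hp]
      rw [← hact_mul, ← hact_mul, h₂]
  have hpq : lamMul act invG (a, g) (act (invG g) a', invG g) = (a * a', g * invG g) := by
    simp only [lamMul]
    rw [inv_eq_self_of_isIdempotentElem hinvG hG he, he.eq, hp, ← hact_comp, ha']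
  have hqp : lamMul act invG (act (invG g) a', invG g) (a, g) =
      (act (invG g) (a' * a), invG g * g) := by
    simp only [lamMul]
    rw [inv_eq_self_of_isIdempotentElem hinvG hG hf, hf.eq, ← hact_comp, (hinvG g).2,
      hact_mul]
  refine ⟨(act (invG g) a', invG g), ?_, ?_, ?_⟩
  · simp only [lamSet, Set.mem_ofPred_eq]
    rw [inv_inv hinvG hG, ← hact_comp, (hinvG g).2]
  · rw [hpq]; simp only [lamMul]
    rw [(hinvG g).1, hp, hact_mul, hp, ha', ha'₁]
  · rw [hqp]; simp only [lamMul]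
    rw [(hinvG g).2, inv_inv hinvG hG, ← hact_comp, ← hact_comp, (hinvG g).2, ← hact_mul,
      ha'₂]

end LambdaSemidirect

theorem lamSemidirect_isInverse {A G : Type*} [Semigroup A] [Semigroup G]
    (hA : IsInverseSemigroup A) (hG : IsInverseSemigroup G)
    (invG : G → G)
    (hinvG : ∀ g : G, g * invG g * g = g ∧ invG g * g * invG g = invG g)
    (act : G → A → A)
    (hact_mul : ∀ (g : G) (a b : A), act g (a * b) = act g a * act g b)
    (hact_comp : ∀ (g h : G) (a : A), act (g * h) a = act g (act h a)) :
    (∀ p ∈ lamSet act invG, ∀ q ∈ lamSet act invG,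
        lamMul act invG p q ∈ lamSet act invG) ∧
    (∀ p ∈ lamSet act invG, ∀ q ∈ lamSet act invG, ∀ r ∈ lamSet act invG,
        lamMul act invG (lamMul act invG p q) r
          = lamMul act invG p (lamMul act invG q r)) ∧
    (∀ p ∈ lamSet act invG, ∃! q, q ∈ lamSet act invG ∧
        lamMul act invG (lamMul act invG p q) p = p ∧
        lamMul act invG (lamMul act invG q p) q = q) := by
  have hclosed : ∀ p ∈ lamSet act invG, ∀ q ∈ lamSet act invG,
      lamMul act invG p q ∈ lamSet act invG :=
    fun _ _ _ hq => lamMul_mem_lamSet hG hinvG hact_mul hact_comp hq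
  refine ⟨hclosed, fun p _ q _ r _ => lamMul_assoc hG hinvG hact_mul hact_comp p q r, ?_⟩
  let _ : Semigroup (lamSet act invG) :=
    { mul := fun p q => ⟨lamMul act invG p q, hclosed _ p.2 _ q.2⟩
      mul_assoc := fun p q r => Subtype.ext (lamMul_assoc hG hinvG hact_mul hact_comp p q r) }
  have hT : IsInverseSemigroup (lamSet act invG) := by
    refine IsInverseSemigroup.of_regular_of_commute (fun p => ?_) (fun e f he hf => ?_)
    · obtain ⟨q, hq, h₁, h₂⟩ := exists_lamMul_inverse hG hinvG hact_mul hact_comp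
        (fun a => (hA a).exists) p.2
      exact ⟨⟨q, hq⟩, Subtype.ext h₁, Subtype.ext h₂⟩
    · exact Subtype.ext (lamMul_comm_of_idempotent hG hinvG hact_mul hact_comp hA e.2 f.2
        (congrArg Subtype.val he) (congrArg Subtype.val hf))
  intro p hp
  obtain ⟨q, ⟨h₁, h₂⟩, hq_unique⟩ := hT ⟨p, hp⟩
  refine ⟨q, ⟨q.2, congrArg Subtype.val h₁, congrArg Subtype.val h₂⟩, ?_⟩
  rintro r ⟨hr, hr₁, hr₂⟩
  exact congrArg Subtype.val (hq_unique ⟨r, hr⟩ ⟨Subtype.ext hr₁, Subtype.ext hr₂⟩)
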